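/- arXiv:1705.00144 — 2 statements merged into one kernel-verified Lean document; each statement's English description precedes it below -/
import Mathlib

section
/- Let Λ be a free abelian multiplicative subgroup of the positive reals with basis α_1,...,α_s, and let B be an AIET with two slopes λ_1,λ_2 ∈ Λ as above (slopes λ_1 on [0,a), λ_2 on [a,1), a=B^{-1}(0)), topologically conjugate to an irrational rotation R_ρ. Write λ_1=∏α_j^{β_j}, λ_2=∏α_j^{δ_j}, and let 𝒩_j(λ) denote the exponent of α_j. If (λ_1,λ_2)≠(1,1), then there exist j∈{1,...,s} and x∈[0,1) such that 𝒩_j(D_+B^n(x))/n converges to ρ(δ_j−β_j)+β_j, which is nonzero. -/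
open Set Filter Function MeasureTheory Topology

noncomputable section

/-- Right derivative of `f` at `x`. -/
def rightD (f : ℝ → ℝ) (x : ℝ) : ℝ := derivWithin f (Set.Ici x) x

/-- Left derivative of `f` at `x`. -/
def leftD (f : ℝ → ℝ) (x : ℝ) : ℝ := derivWithin f (Set.Iic x) x

/-- Break points of `f` on `[0,1)`: the point `0` together with the
discontinuities of `f` and of its (right) derivative in `(0,1)`. -/
def BP (f : ℝ → ℝ) : Set ℝ :=
  {0} ∪ {x ∈ Set.Ioo (0:ℝ) 1 |
    Function.leftLim f x ≠ f x ∨ Function.leftLim (rightD f) x ≠ rightD f x}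

/-- An affine interval exchange transformation of `[0,1)`, modelled as a map of `ℝ`
that is the identity outside `[0,1)`, a bijection of `[0,1)` onto itself, and affine
with positive slope on the pieces of some finite subdivision `0 = a 0 < ... < a p = 1`. -/
structure IsAIET (f : ℝ → ℝ) : Prop where
  bijOn : Set.BijOn f (Set.Ico 0 1) (Set.Ico 0 1)
  id_outside : ∀ x, x ∉ Set.Ico (0:ℝ) 1 → f x = x
  piecewise : ∃ (p : ℕ) (a : ℕ → ℝ), 0 < p ∧ a 0 = 0 ∧ a p = 1 ∧
    (∀ i j, i < j → j ≤ p → a i < a j) ∧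
    ∀ i < p, ∃ lam beta : ℝ, 0 < lam ∧
      ∀ x ∈ Set.Ico (a i) (a (i+1)), f x = lam * x + beta

/-- The jump of slopes of `f` at `x` : `σ_f(x) = D₊f(x)/D₋f(x)` for `x ∈ (0,1)`, and
`σ_f(0) = D₊f(0)/D₋f(1)`. -/
def jump (f : ℝ → ℝ) (x : ℝ) : ℝ :=
  if x = 0 then rightD f 0 / leftD f 1 else rightD f x / leftD f x

/-- The jump of values of `f` at `x` : `Δ_f(x) = f₊(x) - f₋(x)` for `x ∈ (0,1)`
(here `f₊(x) = f(x)` since AIETs are right-continuous), and `Δ_f(0) = f₊(0) - f₋(1)`. -/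
def Δjump (f : ℝ → ℝ) (x : ℝ) : ℝ :=
  if x = 0 then f 0 - Function.leftLim f 1 else f x - Function.leftLim f x

/-- A PL-homeomorphism of `[0,1)` : an AIET which, seen on the circle `[0,1]/(0=1)`,
is a homeomorphism; equivalently at any interior discontinuity the value jumps from `1` to `0`. -/
def IsPLHomeo (f : ℝ → ℝ) : Prop :=
  IsAIET f ∧ ∀ x ∈ Set.Ioo (0:ℝ) 1,
    Function.leftLim f x ≠ f x → f x = 0 ∧ Function.leftLim f x = 1

/-- Word length of `g` with respect to the finite set `S` (letters in `S ∪ S⁻¹`). -/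
def wordLength {G : Type*} [Group G] (S : Finset G) (g : G) : ℕ :=
  sInf {n : ℕ | ∃ w : Fin n → G, (∀ i, w i ∈ S ∨ (w i)⁻¹ ∈ S) ∧ (List.ofFn w).prod = g}

/-- The restricted rotation of `I = [a,b)` by `δ` (the identity outside `I`). -/
def RR (a b δ : ℝ) (x : ℝ) : ℝ :=
  if x ∈ Set.Ico a (b - δ) then x + δ
  else if x ∈ Set.Ico (b - δ) b then x + δ - (b - a) else x

/-!
Conjugating `B` to the rotation `R_ρ` gives `h (B^[k] 0) = fract (k ρ)`, so the orbit point
`B^[k] 0` lies in `[a, 1)` exactly when `fract (k ρ) ≥ 1 - ρ`, i.e. when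
`⌊(k + 1) ρ⌋ = ⌊k ρ⌋ + 1`. Since `B` is affine on a right neighbourhood of every point, the chain
rule makes `D₊B^n(0)` the product of the slopes met along the orbit, and the exponent of `α_j`
telescopes to `β_j n + (δ_j - β_j) ⌊n ρ⌋`. Dividing by `n` gives the limit `ρ (δ_j - β_j) + β_j`,
and irrationality of `ρ` makes it nonzero for some `j` unless all `β_j` and `δ_j` vanish.
-/

open Finset Int

theorem zpow_sum₀ {ι G₀ : Type*} [CommGroupWithZero G₀] {a : G₀} (ha : a ≠ 0) (s : Finset ι)
    (f : ι → ℤ) : a ^ (∑ i ∈ s, f i) = ∏ i ∈ s, a ^ f i := by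
  classical
  induction s using Finset.induction_on with
  | empty => simp
  | insert i s hi ih => rw [sum_insert hi, prod_insert hi, zpow_add₀ ha, ih]

theorem Irrational.mul_intCast_add_intCast_eq_zero_iff {x : ℝ} (hx : Irrational x) {m n : ℤ} :
    x * m + n = 0 ↔ m = 0 ∧ n = 0 := by
  refine ⟨fun h => ?_, fun ⟨hm, hn⟩ => by simp [hm, hn]⟩
  by_cases hm : m = 0
  · subst hm
    simpa using h
  · exact absurd h ((hx.mul_intCast hm).add_intCast n).ne_zero

theorem exists_mem_Ico_succ {α : Type*} [LinearOrder α] (a : ℕ → α) {p : ℕ} {x : α}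
    (h0 : a 0 ≤ x) (hp : x < a p) : ∃ i < p, x ∈ Set.Ico (a i) (a (i + 1)) := by
  induction p with
  | zero => exact absurd hp (not_lt.2 h0)
  | succ n ih =>
    by_cases hx : a n ≤ x
    · exact ⟨n, n.lt_succ_self, hx, hp⟩
    · obtain ⟨i, hi, hxi⟩ := ih (not_le.1 hx)
      exact ⟨i, hi.trans n.lt_succ_self, hxi⟩

theorem MonotoneOn.apply_left_eq_of_surjOn {α : Type*} [PartialOrder α] {h : α → α} {a b : α}
    (hab : a < b) (hmono : MonotoneOn h (Set.Ico a b))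
    (hmaps : MapsTo h (Set.Ico a b) (Set.Ico a b)) (hsurj : SurjOn h (Set.Ico a b) (Set.Ico a b)) : h a = a := by
  have ha : a ∈ Set.Ico a b := ⟨le_rfl, hab⟩
  obtain ⟨y, hy, hya⟩ := hsurj ha
  exact le_antisymm (hya ▸ hmono ha hy hy.1) (hmaps ha).1

theorem Set.MapsTo.semiconj_iterate_apply {α β : Type*} {f : α → α} {g : β → β} {h : α → β}
    {s : Set α} (hf : MapsTo f s s) (hconj : ∀ x ∈ s, h (f x) = g (h x)) (n : ℕ) {x : α}
    (hx : x ∈ s) : h (f^[n] x) = g^[n] (h x) := by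
  induction n with
  | zero => rfl
  | succ n ih => rw [iterate_succ_apply', iterate_succ_apply', hconj _ (hf.iterate n hx), ih]

section Floor

variable {R : Type*} [CommRing R] [LinearOrder R] [IsStrictOrderedRing R] [FloorRing R]

theorem Int.floor_add_sub_floor_eq_ite {ρ : R} (h0 : 0 ≤ ρ) (h1 : ρ < 1) (t : R) :
    ⌊t + ρ⌋ - ⌊t⌋ = if 1 - ρ ≤ fract t then 1 else 0 := by
  rw [← floor_add_fract t, add_assoc, floor_intCast_add, floor_add_fract, add_sub_cancel_left]
  have := fract_nonneg t
  have := fract_lt_one t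
  split_ifs with ht <;> rw [floor_eq_iff] <;> constructor <;> push_cast <;> linarith

theorem Int.fract_add_iterate (ρ t : R) (n : ℕ) :
    (fun u => fract (u + ρ))^[n] (fract t) = fract (t + ρ * n) := by
  induction n with
  | zero => simp
  | succ n ih =>
    rw [iterate_succ_apply', ih, fract_eq_fract]
    exact ⟨-⌊t + ρ * n⌋, by rw [fract]; push_cast; ring⟩

theorem Int.eq_one_sub_of_fract_add_eq_zero {t ρ : R} (ht : t ∈ Set.Ico 0 1)
    (hρ : ρ ∈ Set.Ioo 0 1) (h : fract (t + ρ) = 0) : t = 1 - ρ := by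
  have hint : (⌊t + ρ⌋ : R) = t + ρ := by simpa [h] using floor_add_fract (t + ρ)
  have hpos : (0 : R) < ⌊t + ρ⌋ := by rw [hint]; linarith [ht.1, hρ.1]
  have hlt : (⌊t + ρ⌋ : R) < 2 := by rw [hint]; linarith [ht.2, hρ.2]
  have hone : ⌊t + ρ⌋ = 1 := by
    have := Int.cast_pos.1 hpos
    have : ⌊t + ρ⌋ < 2 := by exact_mod_cast hlt
    omega
  rw [hone, Int.cast_one] at hint
  linarith

end Floor

theorem tendsto_floor_mul_natCast_div_atTop {ρ : ℝ} (hρ : 0 ≤ ρ) :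
    Tendsto (fun n : ℕ => (⌊ρ * n⌋ : ℝ) / n) atTop (𝓝 ρ) :=
  ((tendsto_nat_floor_mul_div_atTop hρ).comp tendsto_natCast_atTop_atTop).congr fun n => by
    simp [← Int.natCast_floor_eq_floor (mul_nonneg hρ n.cast_nonneg)]

theorem tendsto_mul_add_mul_floor_div_atTop {ρ : ℝ} (hρ : 0 ≤ ρ) (b c : ℤ) :
    Tendsto (fun n : ℕ => ((b * n + c * ⌊ρ * n⌋ : ℤ) : ℝ) / n) atTop (𝓝 (ρ * c + b)) := by
  have hlim := (tendsto_const_nhds (x := (b : ℝ))).add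
    ((tendsto_floor_mul_natCast_div_atTop hρ).const_mul (c : ℝ))
  rw [mul_comm, add_comm]
  refine hlim.congr' ((eventually_ne_atTop 0).mono fun n hn => ?_)
  field_simp
  push_cast
  ring

def RightAffineAt (f : ℝ → ℝ) (x m : ℝ) : Prop :=
  f =ᶠ[𝓝[≥] x] fun y => f x + m * (y - x)

namespace RightAffineAt

variable {f g : ℝ → ℝ} {x m m' : ℝ}

theorem rightD_eq (hf : RightAffineAt f x m) : rightD f x = m := by
  have hline : HasDerivWithinAt (fun y => f x + m * (y - x)) m (Ici x) x := by
    simpa using ((hasDerivWithinAt_id x (Ici x)).sub_const x).const_mul m |>.const_add (f x)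
  exact (hline.congr_of_eventuallyEq hf (by simp)).derivWithin (uniqueDiffWithinAt_Ici x)

theorem tendsto_nhdsGE (hf : RightAffineAt f x m) (hm : 0 ≤ m) :
    Tendsto f (𝓝[≥] x) (𝓝[≥] (f x)) := by
  refine tendsto_nhdsWithin_iff.2 ⟨?_, ?_⟩
  · have hline : Continuous fun y => f x + m * (y - x) := by fun_prop
    exact ((hline.tendsto' x (f x) (by simp)).mono_left nhdsWithin_le_nhds).congr' hf.symm
  · filter_upwards [hf, self_mem_nhdsWithin] with y hy hxy
    rw [hy]
    exact le_add_of_nonneg_right (mul_nonneg hm (sub_nonneg.2 hxy))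

theorem comp (hg : RightAffineAt g (f x) m') (hf : RightAffineAt f x m) (hm : 0 ≤ m) :
    RightAffineAt (g ∘ f) x (m' * m) := by
  filter_upwards [hf, (hf.tendsto_nhdsGE hm).eventually hg] with y hfy hgy
  simp only [Function.comp_apply]
  rw [hgy, hfy]
  ring

theorem iterate {s : ℕ → ℝ} (hf : ∀ k, RightAffineAt f (f^[k] x) (s k)) (hs : ∀ k, 0 ≤ s k)
    (n : ℕ) : RightAffineAt f^[n] x (∏ k ∈ range n, s k) := by
  induction n with
  | zero => exact Eventually.of_forall fun y => by simp
  | succ n ih =>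
    rw [iterate_succ', prod_range_succ, mul_comm]
    exact (hf n).comp ih (prod_nonneg fun k _ => hs k)

end RightAffineAt

namespace IsAIET

variable {f : ℝ → ℝ} {x : ℝ}

theorem exists_rightAffineAt (hf : IsAIET f) (hx : x ∈ Set.Ico 0 1) :
    ∃ m, 0 < m ∧ RightAffineAt f x m := by
  obtain ⟨p, a, -, ha0, hap, -, hpiece⟩ := hf.piecewise
  obtain ⟨i, hi, hxi⟩ := exists_mem_Ico_succ a (ha0 ▸ hx.1) (hap ▸ hx.2)
  obtain ⟨m, c, hm, haff⟩ := hpiece i hi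
  refine ⟨m, hm, ?_⟩
  filter_upwards [Ico_mem_nhdsGE hxi.2] with y hy
  rw [haff y ⟨hxi.1.trans hy.1, hy.2⟩, haff x hxi]
  ring

theorem rightD_iterate (hf : IsAIET f) (hx : x ∈ Set.Ico 0 1) (n : ℕ) :
    rightD f^[n] x = ∏ k ∈ range n, rightD f (f^[k] x) := by
  have hslope : ∀ k, 0 < rightD f (f^[k] x) ∧ RightAffineAt f (f^[k] x) (rightD f (f^[k] x)) := by
    intro k
    obtain ⟨m, hm, hfm⟩ := hf.exists_rightAffineAt (hf.bijOn.mapsTo.iterate k hx)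
    rw [hfm.rightD_eq]
    exact ⟨hm, hfm⟩
  exact (RightAffineAt.iterate (fun k => (hslope k).2) (fun k => (hslope k).1.le) n).rightD_eq

end IsAIET

theorem le_iterate_zero_iff_of_semiconj_rotation {B h : ℝ → ℝ} {a ρ : ℝ}
    (hB : MapsTo B (Set.Ico 0 1) (Set.Ico 0 1)) (ha : a ∈ Set.Ico (0:ℝ) 1) (hBa : B a = 0)
    (hρ : ρ ∈ Set.Ioo (0:ℝ) 1) (hbij : BijOn h (Set.Ico 0 1) (Set.Ico 0 1))
    (hmono : StrictMonoOn h (Set.Ico 0 1))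
    (hconj : ∀ x ∈ Set.Ico (0:ℝ) 1, h (B x) = fract (h x + ρ)) (k : ℕ) :
    a ≤ B^[k] 0 ↔ 1 - ρ ≤ fract (ρ * k) := by
  have h0 : h 0 = 0 := hmono.monotoneOn.apply_left_eq_of_surjOn one_pos hbij.mapsTo hbij.surjOn
  have hha : h a = 1 - ρ :=
    eq_one_sub_of_fract_add_eq_zero (hbij.mapsTo ha) hρ (by rw [← hconj a ha, hBa, h0])
  have hmem : (0:ℝ) ∈ Set.Ico 0 1 := ⟨le_rfl, one_pos⟩
  have horbit : h (B^[k] 0) = fract (ρ * k) := by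
    rw [hB.semiconj_iterate_apply (g := fun u => fract (u + ρ)) hconj k hmem, h0, ← fract_zero,
      fract_add_iterate, zero_add]
  rw [← hmono.le_iff_le ha (hB.iterate k hmem), hha, horbit]

theorem stmt_13_general (s : ℕ) (α : Fin s → ℝ) (hα : ∀ j, 0 < α j)
    (B : ℝ → ℝ) (hB : IsAIET B) (a lam₁ lam₂ : ℝ)
    (ha : a ∈ Set.Ioo (0:ℝ) 1) (hBa : B a = 0)
    (hs1 : ∀ x ∈ Set.Ico (0:ℝ) a, rightD B x = lam₁)
    (hs2 : ∀ x ∈ Set.Ico a 1, rightD B x = lam₂)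
    (β δ : Fin s → ℤ) (hlam₁ : lam₁ = ∏ j, α j ^ β j) (hlam₂ : lam₂ = ∏ j, α j ^ δ j)
    (ρ : ℝ) (hρ : Irrational ρ) (hρ01 : ρ ∈ Set.Ioo (0:ℝ) 1)
    (h : ℝ → ℝ) (hbij : Set.BijOn h (Set.Ico 0 1) (Set.Ico 0 1))
    (hmono : StrictMonoOn h (Set.Ico 0 1))
    (hconj : ∀ x ∈ Set.Ico (0:ℝ) 1, h (B x) = Int.fract (h x + ρ))
    (hnontriv : (lam₁, lam₂) ≠ (1, 1)) :
    ∃ (j : Fin s) (x : ℝ), x ∈ Set.Ico (0:ℝ) 1 ∧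
      ∃ e : ℕ → Fin s → ℤ,
        (∀ n : ℕ, rightD (B^[n]) x = ∏ k, α k ^ e n k) ∧
        Filter.Tendsto (fun n : ℕ => (e n j : ℝ) / n) Filter.atTop
          (nhds (ρ * ((δ j : ℝ) - (β j : ℝ)) + (β j : ℝ))) ∧
        ρ * ((δ j : ℝ) - (β j : ℝ)) + (β j : ℝ) ≠ 0 := by
  obtain ⟨j, hj⟩ : ∃ j, ρ * ((δ j : ℝ) - (β j : ℝ)) + (β j : ℝ) ≠ 0 := by
    by_contra! hzero
    have hβδ (i : Fin s) : β i = 0 ∧ δ i = 0 := by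
      have := hρ.mul_intCast_add_intCast_eq_zero_iff (m := δ i - β i) |>.1
        (by push_cast; exact hzero i)
      omega
    exact hnontriv (by simp [hlam₁, hlam₂, hβδ])
  have h0 : (0:ℝ) ∈ Set.Ico 0 1 := ⟨le_rfl, one_pos⟩
  have hslope (k : ℕ) : rightD B (B^[k] 0) =
      ∏ i, α i ^ (β i + (δ i - β i) * (⌊ρ * ↑(k + 1)⌋ - ⌊ρ * k⌋)) := by
    have hmem := hB.bijOn.mapsTo.iterate k h0
    have hvisit := le_iterate_zero_iff_of_semiconj_rotation hB.bijOn.mapsTo ⟨ha.1.le, ha.2⟩ hBa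
      hρ01 hbij hmono hconj k
    rw [Nat.cast_succ, mul_add_one, floor_add_sub_floor_eq_ite hρ01.1.le hρ01.2]
    split_ifs with hk
    · simp [hs2 _ ⟨hvisit.2 hk, hmem.2⟩, hlam₂]
    · simp [hs1 _ ⟨hmem.1, not_le.1 (mt hvisit.1 hk)⟩, hlam₁]
  refine ⟨j, 0, h0, fun n i => β i * n + (δ i - β i) * ⌊ρ * n⌋, fun n => ?_, ?_, hj⟩
  · rw [hB.rightD_iterate h0, prod_congr rfl fun k _ => hslope k, Finset.prod_comm]
    refine prod_congr rfl fun i _ => ?_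
    rw [← zpow_sum₀ (hα i).ne', sum_add_distrib, ← mul_sum,
      sum_range_sub (fun k => ⌊ρ * k⌋)]
    simp [mul_comm]
  · simpa using tendsto_mul_add_mul_floor_div_atTop hρ01.1.le (β j) (δ j - β j)

theorem stmt_13 (s : ℕ) (α : Fin s → ℝ) (hα : ∀ j, 0 < α j)
    (hfree : Function.Injective fun e : Fin s → ℤ => ∏ j, α j ^ e j)
    (B : ℝ → ℝ) (hB : IsAIET B) (a lam₁ lam₂ : ℝ)
    (ha : a ∈ Set.Ioo (0:ℝ) 1) (hBa : B a = 0)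
    (hs1 : ∀ x ∈ Set.Ico (0:ℝ) a, rightD B x = lam₁)
    (hs2 : ∀ x ∈ Set.Ico a 1, rightD B x = lam₂)
    (β δ : Fin s → ℤ) (hlam₁ : lam₁ = ∏ j, α j ^ β j) (hlam₂ : lam₂ = ∏ j, α j ^ δ j)
    (ρ : ℝ) (hρ : Irrational ρ) (hρ01 : ρ ∈ Set.Ioo (0:ℝ) 1)
    (h : ℝ → ℝ) (hbij : Set.BijOn h (Set.Ico 0 1) (Set.Ico 0 1))
    (hcont : ContinuousOn h (Set.Ico 0 1)) (hmono : StrictMonoOn h (Set.Ico 0 1))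
    (hconj : ∀ x ∈ Set.Ico (0:ℝ) 1, h (B x) = Int.fract (h x + ρ))
    (hnontriv : (lam₁, lam₂) ≠ (1, 1)) :
    ∃ (j : Fin s) (x : ℝ), x ∈ Set.Ico (0:ℝ) 1 ∧
      ∃ e : ℕ → Fin s → ℤ,
        (∀ n : ℕ, rightD (B^[n]) x = ∏ k, α k ^ e n k) ∧
        Filter.Tendsto (fun n : ℕ => (e n j : ℝ) / n) Filter.atTop
          (nhds (ρ * ((δ j : ℝ) - (β j : ℝ)) + (β j : ℝ))) ∧
        ρ * ((δ j : ℝ) - (β j : ℝ)) + (β j : ℝ) ≠ 0 :=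
  stmt_13_general s α hα B hB a lam₁ lam₂ ha hBa hs1 hs2 β δ hlam₁ hlam₂ ρ hρ hρ01 h hbij hmono
    hconj hnontriv
end
end

section
/- Suppose α is irrational and m,n are integers with |m|≠|n|. Then there is no measure-preserving invertible map of the circle ℝ/ℤ conjugating the rotation R_{mα} to R_{nα}; equivalently, if the equality e^{2πiαm} = e^{±2πiαn} of spectral generators held, then αm ≡ ±αn (mod ℤ), contradicting irrationality of α. Hence in any group of AIETs, a relation b a^m b^{-1} = a^n with a an infinite order restricted rotation of parameter ratio α forces |m|=|n|. -/
open Set Filter Function MeasureTheory Topology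

noncomputable section

/-!
A measurable map `T` of the circle with `T (x + u) = T x + v` turns the character `e₁ ∘ T` into an
eigenfunction of translation by `u` with eigenvalue `e(v)`. Translation by `u` multiplies the
`k`-th Fourier coefficient by `e(k u)`, and some coefficient of `e₁ ∘ T` is nonzero, so
`e(v) = e(k u)`, i.e. `v = k • u`. Applied to a conjugacy and its inverse this makes `m α` and
`n α` integer multiples of each other modulo `ℤ`, hence `|m| = |n|` when `α` is irrational.

For the AIET relation, the nontrivial powers of the restricted rotation `a` move exactly the points
of `I = [l, r)`, so `b` preserves `I`; transported to `ℝ ⧸ (r - l)ℤ` through `I`, `b` becomes a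
measurable bijection (with measurable inverse by Lusin–Souslin) conjugating the rotation by `m δ`
to the rotation by `n δ`, and `δ / (r - l) = α` is irrational.
-/

open AddSubgroup in
theorem abs_eq_abs_of_zsmul_mem_zmultiples {G : Type*} [AddGroup G] {u : G}
    (hu : ¬IsOfFinAddOrder u) {m n : ℤ} (hn : n • u ∈ zmultiples (m • u))
    (hm : m • u ∈ zmultiples (n • u)) : |m| = |n| := by
  have hinj : Injective (· • u : ℤ → G) := injective_zsmul_iff_not_isOfFinAddOrder.mpr hu
  have hdvd {i j : ℤ} : i • u ∈ zmultiples (j • u) → j ∣ i := by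
    rintro ⟨k, hk⟩
    exact ⟨k, hinj (by simp only [mul_comm j k, mul_zsmul, hk])⟩
  rw [Int.abs_eq_natAbs, Int.abs_eq_natAbs, Int.natAbs_eq_of_dvd_dvd (hdvd hm) (hdvd hn)]

theorem measurable_of_eqOn_of_sUnion_eq_univ {α β : Type*} [MeasurableSpace α]
    [MeasurableSpace β] {f : α → β} {S : Set (Set α)} (hS : S.Countable) (hcover : ⋃₀ S = univ)
    (h : ∀ t ∈ S, MeasurableSet t ∧ ∃ g : α → β, Measurable g ∧ EqOn f g t) :
    Measurable f := by
  intro s hs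
  have hpre : f ⁻¹' s = ⋃ t ∈ S, t ∩ f ⁻¹' s := by
    rw [← iUnion₂_inter, ← sUnion_eq_biUnion, hcover, univ_inter]
  rw [hpre]
  refine .biUnion hS fun t ht => ?_
  obtain ⟨ht_meas, g, hg, hfg⟩ := h t ht
  rw [hfg.inter_preimage_eq]
  exact ht_meas.inter (hg hs)

theorem Equiv.measurable_symm_of_measurable {α β : Type*} [MeasurableSpace α]
    [StandardBorelSpace α] [MeasurableSpace β] [MeasurableSpace.CountablySeparated β]
    (e : α ≃ β) (he : Measurable e) : Measurable e.symm := fun s hs => by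
  simpa [e.image_eq_preimage_symm] using
    (he.measurableEmbedding e.injective).measurableSet_image.2 hs

theorem Equiv.Perm.apply_mem_iff_of_mul_mul_inv_eq {X : Type*} {f g b : Equiv.Perm X} {s : Set X}
    (hf : ∀ x, f x = x ↔ x ∉ s) (hg : ∀ x, g x = x ↔ x ∉ s) (h : b * f * b⁻¹ = g) (x : X) :
    b x ∈ s ↔ x ∈ s := by
  have hbf : g (b x) = b (f x) := by simp [← h]
  rw [← not_iff_not, ← hg (b x), ← hf x, hbf, b.injective.eq_iff]

theorem Equiv.Perm.zpow_apply_mem_and_eq {X G : Type*} [AddCommGroup G] {g : Equiv.Perm X}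
    {s : Set X} {ρ : X → G} {u : G} (hs : ∀ x, g x ∈ s ↔ x ∈ s)
    (hρ : ∀ x ∈ s, ρ (g x) = ρ x + u) (k : ℤ) :
    ∀ x ∈ s, (g ^ k) x ∈ s ∧ ρ ((g ^ k) x) = ρ x + k • u := by
  induction k using Int.induction_on with
  | zero => simp
  | succ k ih =>
    intro x hx
    obtain ⟨hmem, heq⟩ := ih (g x) ((hs x).2 hx)
    refine ⟨by rwa [zpow_add_one, mul_apply], ?_⟩
    rw [zpow_add_one, mul_apply, heq, hρ x hx, add_zsmul, one_zsmul, add_assoc, add_comm u]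
  | pred k ih =>
    intro x hx
    have hx' : g⁻¹ x ∈ s := (hs _).1 (by simpa using hx)
    obtain ⟨hmem, heq⟩ := ih (g⁻¹ x) hx'
    have hρ' : ρ (g⁻¹ x) = ρ x - u := by
      rw [eq_sub_iff_add_eq, ← hρ _ hx']
      simp
    refine ⟨by rwa [zpow_sub_one, mul_apply], ?_⟩
    rw [zpow_sub_one, mul_apply, heq, hρ', sub_zsmul, one_zsmul]
    abel

namespace AddCircle

variable {p : ℝ}

theorem fourier_apply_add (k : ℤ) (x y : AddCircle p) :
    fourier k (x + y) = fourier k x * fourier k y := by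
  simp only [fourier_apply, zsmul_add, toCircle_add, Circle.coe_mul]

variable [Fact (0 < p)]

theorem not_isOfFinAddOrder_coe_of_irrational {a : ℝ} (h : Irrational (a / p)) :
    ¬IsOfFinAddOrder (a : AddCircle p) :=
  not_isOfFinAddOrder_iff_forall_rat_ne_div.mpr fun q hq => h ⟨q, hq⟩

theorem fourierCoeff_comp_add_right {E : Type*} [NormedAddCommGroup E] [NormedSpace ℂ E]
    [CompleteSpace E] (f : AddCircle p → E) (u : AddCircle p) (k : ℤ) :
    fourierCoeff (fun x => f (x + u)) k = fourier k u • fourierCoeff f k := by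
  have hunit : fourier k u * fourier (-k) u = 1 := by
    rw [← fourier_add, add_neg_cancel, fourier_zero]
  calc fourierCoeff (fun x => f (x + u)) k
      = ∫ x, fourier k u • (fourier (-k) (x + u) • f (x + u)) ∂haarAddCircle := by
        refine integral_congr_ae (.of_forall fun x => ?_)
        dsimp only
        rw [smul_smul, fourier_apply_add, mul_left_comm, hunit, mul_one]
    _ = fourier k u • fourierCoeff f k := by
        rw [integral_smul, integral_add_right_eq_self (fun x => fourier (-k) x • f x)]
        rfl

theorem ae_eq_zero_of_fourierCoeff_eq_zero {f : AddCircle p → ℂ} (hf : MemLp f 2 haarAddCircle)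
    (h : ∀ k, fourierCoeff f k = 0) : f =ᵐ[haarAddCircle] 0 := by
  have hzero : hf.toLp f = 0 := fourierBasis.repr.injective <| by
    ext k
    rw [fourierBasis_repr, fourierCoeff_congr_ae hf.coeFn_toLp, h]
    simp
  exact hf.coeFn_toLp.symm.trans (hzero ▸ Lp.coeFn_zero ℂ 2 _)

theorem mem_zmultiples_of_semiconj {T : AddCircle p → AddCircle p} (hT : Measurable T)
    {u v : AddCircle p} (h : Semiconj T (· + u) (· + v)) : v ∈ AddSubgroup.zmultiples u := by
  set g : AddCircle p → ℂ := fun x => fourier 1 (T x) with hg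
  have hg_norm (x) : ‖g x‖ = 1 := Circle.norm_coe _
  have hg_mem : MemLp g 2 haarAddCircle :=
    .of_bound ((map_continuous _).measurable.comp hT).aestronglyMeasurable 1
      (.of_forall fun x => (hg_norm x).le)
  obtain ⟨k, hk⟩ : ∃ k, fourierCoeff g k ≠ 0 := by
    by_contra! h0
    obtain ⟨x, hx⟩ := (ae_eq_zero_of_fourierCoeff_eq_zero hg_mem h0).exists
    simpa [hx] using hg_norm x
  have hcoeff : fourierCoeff (fun x => g (x + u)) k = fourier 1 v * fourierCoeff g k := by
    simp only [hg, h.eq, fourier_apply_add, mul_comm _ (fourier 1 v : ℂ)]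
    exact fourierCoeff.const_mul _ _ _
  rw [fourierCoeff_comp_add_right] at hcoeff
  refine ⟨k, injective_toCircle (Fact.out : 0 < p).ne' (Subtype.coe_injective ?_)⟩
  simpa [fourier_apply] using mul_right_cancel₀ hk hcoeff

theorem abs_eq_abs_of_semiconj {u : AddCircle p} (hu : ¬IsOfFinAddOrder u) {m n : ℤ}
    (T : AddCircle p ≃ᵐ AddCircle p) (hT : Semiconj T (· + m • u) (· + n • u)) : |m| = |n| :=
  abs_eq_abs_of_zsmul_mem_zmultiples hu (mem_zmultiples_of_semiconj T.measurable hT)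
    (mem_zmultiples_of_semiconj T.symm.measurable (hT.inverse_left T.left_inv T.right_inv))


def measurableEquivOfPermIco (l : ℝ) (c : Equiv.Perm ℝ) (hc : Measurable c)
    (hI : ∀ x, c x ∈ Ico l (l + p) ↔ x ∈ Ico l (l + p)) : AddCircle p ≃ᵐ AddCircle p where
  toEquiv := (equivIco p l).trans ((c.subtypeEquiv fun x => (hI x).symm).trans (equivIco p l).symm)
  measurable_toFun := AddCircle.measurable_mk'.comp
    (hc.comp (measurable_subtype_coe.comp (measurableEquivIco p l).measurable))
  measurable_invFun := AddCircle.measurable_mk'.comp ((c.measurable_symm_of_measurable hc).comp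
    (measurable_subtype_coe.comp (measurableEquivIco p l).measurable))

theorem measurableEquivOfPermIco_apply (l : ℝ) (c : Equiv.Perm ℝ) (hc : Measurable c)
    (hI : ∀ x, c x ∈ Ico l (l + p) ↔ x ∈ Ico l (l + p)) (q : AddCircle p) :
    measurableEquivOfPermIco l c hc hI q = (c (equivIco p l q) : AddCircle p) :=
  rfl

end AddCircle

section RestrictedRotation

variable {l p δ : ℝ}

theorem RR_mem_Ico_iff (hδ : 0 ≤ δ) (hδp : δ ≤ p) (x : ℝ) :
    RR l (l + p) δ x ∈ Ico l (l + p) ↔ x ∈ Ico l (l + p) := by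
  unfold RR
  split_ifs with h₁ h₂
  · exact iff_of_true ⟨by linarith [h₁.1], by linarith [h₁.2]⟩ ⟨h₁.1, by linarith [h₁.2]⟩
  · exact iff_of_true ⟨by linarith [h₂.1], by linarith [h₂.2]⟩ ⟨by linarith [h₂.1], h₂.2⟩
  · rfl

theorem RR_of_notMem (hδ : 0 ≤ δ) (hδp : δ ≤ p) {x : ℝ} (hx : x ∉ Ico l (l + p)) :
    RR l (l + p) δ x = x := by
  unfold RR
  rw [if_neg fun h => hx ⟨h.1, by linarith [h.2]⟩, if_neg fun h => hx ⟨by linarith [h.1], h.2⟩]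

theorem coe_RR {x : ℝ} (hx : x ∈ Ico l (l + p)) :
    (RR l (l + p) δ x : AddCircle p) = x + δ := by
  unfold RR
  split_ifs with h₁ h₂
  · exact AddCircle.coe_add (p := p) x δ
  · rw [add_sub_cancel_left, AddCircle.coe_sub, AddCircle.coe_period, sub_zero, AddCircle.coe_add]
  · exact (h₂ ⟨not_lt.1 fun h => h₁ ⟨hx.1, h⟩, hx.2⟩).elim

theorem zpow_apply_mem_Ico_and_coe {a : Equiv.Perm ℝ} (ha : ∀ x, a x = RR l (l + p) δ x)
    (hδ : 0 ≤ δ) (hδp : δ ≤ p) (k : ℤ) :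
    ∀ x ∈ Ico l (l + p), (a ^ k) x ∈ Ico l (l + p) ∧
      ((a ^ k) x : AddCircle p) = x + k • (δ : AddCircle p) :=
  a.zpow_apply_mem_and_eq (fun x => ha x ▸ RR_mem_Ico_iff hδ hδp x) (fun x hx => ha x ▸ coe_RR hx) k

theorem zpow_apply_eq_self_iff_notMem_Ico {a : Equiv.Perm ℝ} (ha : ∀ x, a x = RR l (l + p) δ x)
    (hδ : 0 ≤ δ) (hδp : δ ≤ p) (hirr : ¬IsOfFinAddOrder (δ : AddCircle p)) {k : ℤ} (hk : k ≠ 0)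
    (x : ℝ) : (a ^ k) x = x ↔ x ∉ Ico l (l + p) := by
  refine ⟨fun hfix hx => hirr ?_, fun hx => ?_⟩
  · have hcoe := (zpow_apply_mem_Ico_and_coe ha hδ hδp k x hx).2
    rw [hfix, left_eq_add] at hcoe
    exact isOfFinAddOrder_iff_zsmul_eq_zero.mpr ⟨k, hk, hcoe⟩
  · exact Equiv.Perm.zpow_apply_eq_self_of_apply_eq_self ((ha x).trans (RR_of_notMem hδ hδp hx)) k

theorem zpow_eq_one_iff_of_RR {a : Equiv.Perm ℝ} (ha : ∀ x, a x = RR l (l + p) δ x)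
    (hp : 0 < p) (hδ : 0 ≤ δ) (hδp : δ ≤ p) (hirr : ¬IsOfFinAddOrder (δ : AddCircle p)) {k : ℤ} :
    a ^ k = 1 ↔ k = 0 := by
  refine ⟨fun h => by_contra fun hk => ?_, by rintro rfl; rfl⟩
  exact (zpow_apply_eq_self_iff_notMem_Ico ha hδ hδp hirr hk l).1 (by rw [h]; rfl)
    (left_mem_Ico.2 (lt_add_of_pos_right l hp))

end RestrictedRotation

theorem IsAIET.measurable {f : ℝ → ℝ} (hf : IsAIET f) : Measurable f := by
  obtain ⟨p, a, -, ha0, hap, -, haffine⟩ := hf.piecewise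
  refine measurable_of_eqOn_of_sUnion_eq_univ (S := insert (Ico 0 1)ᶜ
    ((fun i => Ico (a i) (a (i + 1))) '' Iio p)) ((Iio p).to_countable.image _ |>.insert _) ?_ ?_
  · refine eq_univ_of_forall fun x => ?_
    by_cases hx : x ∈ Ico (0 : ℝ) 1
    · rw [← ha0, ← hap] at hx
      obtain ⟨i, hi, hxi⟩ := mem_iUnion₂.mp (Ico_subset_biUnion_Ico p a hx)
      exact ⟨_, mem_insert_of_mem _ ⟨i, Finset.mem_range.mp hi, rfl⟩, hxi⟩
    · exact ⟨_, mem_insert _ _, hx⟩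
  · rintro t (rfl | ⟨i, hi, rfl⟩)
    · exact ⟨measurableSet_Ico.compl, id, measurable_id, fun x hx => hf.id_outside x hx⟩
    · obtain ⟨lam, beta, -, hfi⟩ := haffine i hi
      exact ⟨measurableSet_Ico, fun x => lam * x + beta, by fun_prop, hfi⟩

open AddCircle in
theorem abs_eq_abs_of_mul_zpow_RR_mul_inv_eq {l p δ : ℝ} (hp : 0 < p) (hδ : 0 ≤ δ) (hδp : δ ≤ p)
    (hirr : Irrational (δ / p)) {a b : Equiv.Perm ℝ} (ha : ∀ x, a x = RR l (l + p) δ x)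
    (hb : Measurable b) {m n : ℤ} (h : b * a ^ m * b⁻¹ = a ^ n) : |m| = |n| := by
  have : Fact (0 < p) := ⟨hp⟩
  have hu := not_isOfFinAddOrder_coe_of_irrational hirr
  have hpow (k : ℤ) : a ^ k = 1 ↔ k = 0 := zpow_eq_one_iff_of_RR ha hp hδ hδp hu
  rcases eq_or_ne m 0 with rfl | hm
  · rw [zpow_zero, mul_one, mul_inv_cancel, eq_comm, hpow] at h
    rw [h]
  rcases eq_or_ne n 0 with rfl | hn
  · rw [zpow_zero, mul_inv_eq_one, mul_eq_left, hpow] at h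
    exact absurd h hm
  have hbI := Equiv.Perm.apply_mem_iff_of_mul_mul_inv_eq
    (zpow_apply_eq_self_iff_notMem_Ico ha hδ hδp hu hm)
    (zpow_apply_eq_self_iff_notMem_Ico ha hδ hδp hu hn) h
  refine abs_eq_abs_of_semiconj hu (measurableEquivOfPermIco l b hb hbI) fun q => ?_
  obtain ⟨x, hx, rfl⟩ : ∃ x ∈ Ico l (l + p), (x : AddCircle p) = q :=
    ⟨_, (equivIco p l q).2, coe_equivIco⟩
  obtain ⟨hmx, hcoe_m⟩ := zpow_apply_mem_Ico_and_coe ha hδ hδp m x hx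
  obtain ⟨-, hcoe_n⟩ := zpow_apply_mem_Ico_and_coe ha hδ hδp n (b x) ((hbI x).2 hx)
  simp only [measurableEquivOfPermIco_apply]
  rw [← hcoe_m, equivIco_coe_of_mem hmx, equivIco_coe_of_mem hx, ← hcoe_n, ← h]
  simp

theorem stmt_19 (α : ℝ) (hα : Irrational α) :
    (∀ m n : ℤ, |m| ≠ |n| →
      ¬ ∃ T : AddCircle (1:ℝ) ≃ᵐ AddCircle (1:ℝ),
        MeasurePreserving ⇑T volume volume ∧
        ∀ x : AddCircle (1:ℝ),
          T (x + (((m : ℝ) * α : ℝ) : AddCircle (1:ℝ))) =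
            T x + (((n : ℝ) * α : ℝ) : AddCircle (1:ℝ))) ∧
    (∀ (l r δ : ℝ) (a b : Equiv.Perm ℝ) (m n : ℤ),
      l < r → 0 < δ → δ < r - l → δ / (r - l) = α →
      Set.Ico l r ⊆ Set.Ico (0:ℝ) 1 →
      IsAIET ⇑a → IsAIET ⇑b →
      (∀ x, a x = RR l r δ x) →
      b * a ^ m * b⁻¹ = a ^ n → |m| = |n|) := by
  constructor
  · rintro m n hmn ⟨T, -, hT⟩
    have hu := AddCircle.not_isOfFinAddOrder_coe_of_irrational (p := 1) (by rwa [div_one])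
    refine hmn (AddCircle.abs_eq_abs_of_semiconj hu T fun x => ?_)
    simpa only [← zsmul_eq_mul, AddCircle.coe_zsmul] using hT x
  · rintro l r δ a b m n hlr hδ hδr rfl - - hb ha h
    obtain ⟨p, rfl⟩ : ∃ p, r = l + p := ⟨r - l, by ring⟩
    rw [add_sub_cancel_left] at hδr hα
    exact abs_eq_abs_of_mul_zpow_RR_mul_inv_eq (by linarith) hδ.le hδr.le hα ha hb.measurable h
end
end
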